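/- arXiv:2605.30447 — 3 statements merged into one kernel-verified Lean document; each statement's English description precedes it below -/
import Mathlib

section
/- If a label ranking model h is full-rank calibrated, then h is sub-k calibrated for every k ≤ m: for every subset ℬ of size k, every ranking ρ of ℬ, and every distribution q over rankings of ℬ attained by the sub-k marginal of h(X), P(Π_ℬ = ρ | proj_𝒫 h(X) = q) = q[ρ]. -/
open scoped Classical
noncomputable section

/-- Probability of an event `A` under a weight function `w` on a finite space. -/
def Pr {Ω : Type*} [Fintype Ω] (w : Ω → ℝ) (A : Set Ω) : ℝ :=
  ∑ ω, if ω ∈ A then w ω else 0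

/-- Conditional probability `P(A | B)`. -/
def condPr {Ω : Type*} [Fintype Ω] (w : Ω → ℝ) (A B : Set Ω) : ℝ :=
  Pr w (A ∩ B) / Pr w B

/-- Sub-k marginal of a distribution `p` over full rankings: the probability of
the sub-ranking `ρ` of `ℬ` is the total mass of full rankings containing `ρ`. -/
def subProj {ι : Type*} [Fintype ι] [DecidableEq ι] (ℬ : Finset ι)
    (p : (ι ≃ Fin (Fintype.card ι)) → ℝ) (ρ : {x // x ∈ ℬ} ≃ Fin ℬ.card) : ℝ :=
  ∑ π : ι ≃ Fin (Fintype.card ι),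
    if (∀ i j : {x // x ∈ ℬ}, ρ i < ρ j ↔ π i.1 < π j.1) then p π else 0

/-- Top-k marginal of a distribution `p` over full rankings: the probability of
the sub-ranking `ρ` of `ℬ` is the total mass of full rankings whose top `|ℬ|`
positions coincide with `ρ`. -/
def topProj {ι : Type*} [Fintype ι] [DecidableEq ι] (ℬ : Finset ι)
    (p : (ι ≃ Fin (Fintype.card ι)) → ℝ) (ρ : {x // x ∈ ℬ} ≃ Fin ℬ.card) : ℝ :=
  ∑ π : ι ≃ Fin (Fintype.card ι),
    if (∀ i : {x // x ∈ ℬ}, (π i.1 : ℕ) = (ρ i : ℕ)) then p π else 0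

lemma Pr_nonneg' {Ω : Type*} [Fintype Ω] (w : Ω → ℝ) (hw0 : ∀ ω, 0 ≤ w ω) (A : Set Ω) :
    0 ≤ Pr w A :=
  Finset.sum_nonneg fun ω _ => by by_cases h : ω ∈ A <;> simp [Pr, h, hw0 ω]

lemma Pr_inter_le_right' {Ω : Type*} [Fintype Ω] (w : Ω → ℝ) (hw0 : ∀ ω, 0 ≤ w ω)
    (A B : Set Ω) : Pr w (A ∩ B) ≤ Pr w B := by
  apply Finset.sum_le_sum
  intro ω _
  by_cases h : ω ∈ A ∩ B
  · simp [h, h.2]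
  · by_cases h2 : ω ∈ B <;> simp [h, h2, hw0 ω]

lemma Pr_decomp' {Ω : Type*} [Fintype Ω] (w : Ω → ℝ) {α : Type*} (f : Ω → α)
    (S : Finset α) (hS : ∀ ω, f ω ∈ S) (C : α → Prop) [DecidablePred C] (A : Set Ω) :
    Pr w (A ∩ {ω | C (f ω)}) = ∑ p ∈ S.filter C, Pr w (A ∩ {ω | f ω = p}) := by
  unfold Pr
  rw [Finset.sum_comm]
  refine Finset.sum_congr rfl fun ω _ => ?_
  by_cases hA : ω ∈ A
  · by_cases hC : C (f ω)
    · simp only [Set.mem_inter_iff, Set.mem_setOf_eq, hA, hC, true_and, if_true]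
      rw [Finset.sum_congr rfl (fun p _ => ?_), Finset.sum_ite_eq (S.filter C) (f ω)
        (fun _ => w ω), if_pos (Finset.mem_filter.2 ⟨hS ω, hC⟩)]
      by_cases hp : f ω = p <;> simp [hp]
    · simp only [Set.mem_inter_iff, Set.mem_setOf_eq, hA, hC, true_and, and_false,
        if_false]
      rw [Finset.sum_eq_zero]
      intro p hp
      have hCp := (Finset.mem_filter.1 hp).2
      have hne : f ω ≠ p := fun he => hC (he ▸ hCp)
      simp [hne]
  · simp only [Set.mem_inter_iff, hA, false_and, if_false]
    exact (Finset.sum_eq_zero fun p _ => by simp [hA]).symm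

set_option maxHeartbeats 1000000 in
/-- If a label ranking model `h` is full-rank calibrated, then `h` is sub-k
calibrated for every `k ≤ m`: for every subset `ℬ` of size `k`, every ranking
`ρ` of `ℬ`, and every attained sub-k marginal distribution `q`,
`P(Π_ℬ = ρ | proj_𝒫 h(X) = q) = q ρ`. -/
theorem full_rank_calibration_implies_subk_calibration
    {Ω 𝒳 ι : Type*} [Fintype Ω] [Fintype ι] [DecidableEq ι]
    (w : Ω → ℝ) (hw0 : ∀ ω, 0 ≤ w ω) (hw1 : ∑ ω, w ω = 1)
    (X : Ω → 𝒳) (R : Ω → (ι ≃ Fin (Fintype.card ι)))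
    (h : 𝒳 → (ι ≃ Fin (Fintype.card ι)) → ℝ)
    (hdist : ∀ x, (∀ π, 0 ≤ h x π) ∧ ∑ π, h x π = 1)
    (fullrank : ∀ (π : ι ≃ Fin (Fintype.card ι)) (p : (ι ≃ Fin (Fintype.card ι)) → ℝ),
      0 < Pr w {ω | h (X ω) = p} →
      condPr w {ω | R ω = π} {ω | h (X ω) = p} = p π)
    (k : ℕ) (hk : k ≤ Fintype.card ι) :
    ∀ ℬ : Finset ι, ℬ.card = k →
      ∀ (ρ : {x // x ∈ ℬ} ≃ Fin ℬ.card) (q : ({x // x ∈ ℬ} ≃ Fin ℬ.card) → ℝ),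
        0 < Pr w {ω | subProj ℬ (h (X ω)) = q} →
        condPr w {ω | ∀ i j : {x // x ∈ ℬ}, ρ i < ρ j ↔ R ω i.1 < R ω j.1}
          {ω | subProj ℬ (h (X ω)) = q} = q ρ := by
  intro ℬ hcard ρ q hq
  -- per-fiber full-rank calibration, valid for every `p`
  have hπfib : ∀ (p : (ι ≃ Fin (Fintype.card ι)) → ℝ) (π : ι ≃ Fin (Fintype.card ι)),
      Pr w ({ω | h (X ω) = p} ∩ {ω | R ω = π}) = p π * Pr w {ω | h (X ω) = p} := by
    intro p π
    rw [Set.inter_comm]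
    by_cases hpos : 0 < Pr w {ω | h (X ω) = p}
    · have hc := fullrank π p hpos
      unfold condPr at hc
      rw [div_eq_iff (ne_of_gt hpos)] at hc
      rw [hc]
    · have h0 : Pr w {ω | h (X ω) = p} = 0 :=
        le_antisymm (not_lt.1 hpos) (Pr_nonneg' w hw0 _)
      rw [h0, mul_zero]
      exact le_antisymm (h0 ▸ Pr_inter_le_right' w hw0 _ _) (Pr_nonneg' w hw0 _)
  have hmem : ∀ ω, h (X ω) ∈ Finset.univ.image (fun ω => h (X ω)) :=
    fun ω => Finset.mem_image_of_mem _ (Finset.mem_univ ω)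
  have h1 := Pr_decomp' w (fun ω => h (X ω)) (Finset.univ.image (fun ω => h (X ω))) hmem
    (fun p => subProj ℬ p = q)
    {ω | ∀ i j : {x // x ∈ ℬ}, ρ i < ρ j ↔ R ω i.1 < R ω j.1}
  have h2 := Pr_decomp' w (fun ω => h (X ω)) (Finset.univ.image (fun ω => h (X ω))) hmem
    (fun p => subProj ℬ p = q) Set.univ
  simp only [Set.univ_inter] at h2
  unfold condPr
  rw [h1, h2]
  rw [h2] at hq
  have key : ∀ p ∈ (Finset.univ.image (fun ω => h (X ω))).filter
      (fun p => subProj ℬ p = q),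
      Pr w ({ω | ∀ i j : {x // x ∈ ℬ}, ρ i < ρ j ↔ R ω i.1 < R ω j.1} ∩
        {ω | h (X ω) = p}) = q ρ * Pr w {ω | h (X ω) = p} := by
    intro p hpF
    have hpq : subProj ℬ p = q := (Finset.mem_filter.1 hpF).2
    rw [Set.inter_comm]
    rw [Pr_decomp' w R Finset.univ (fun ω => Finset.mem_univ _)
      (fun π => ∀ i j : {x // x ∈ ℬ}, ρ i < ρ j ↔ π i.1 < π j.1) {ω | h (X ω) = p}]
    rw [Finset.sum_congr rfl (fun π _ => hπfib p π), ← Finset.sum_mul,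
      Finset.sum_filter]
    have hsp : (∑ π : ι ≃ Fin (Fintype.card ι),
        if (∀ i j : {x // x ∈ ℬ}, ρ i < ρ j ↔ π i.1 < π j.1) then p π else 0)
        = q ρ := by
      rw [← hpq]; rfl
    rw [hsp]
  rw [Finset.sum_congr rfl key, ← Finset.mul_sum, mul_div_assoc,
    div_self (ne_of_gt hq), mul_one]
end
end

section
/- There exists a label ranking model that is sub-2 calibrated but not full-rank calibrated: for an item set of 3 items, there is a finite probability space with random variables X (two features, each with probability 1/2) and Π (uniform over all 6 rankings, conditionally on either feature) and a model h assigning probability 2/6 to the rankings i1≻i2≻i3 and i3≻i2≻i1 and 1/12 to each remaining ranking, such that all sub-2 marginals of h(X) equal the true conditional pairwise probabilities (all 1/2), so h is sub-2 calibrated, while h(X) differs from the true conditional ranking distribution, so h is not full-rank calibrated. -/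
open scoped Classical
noncomputable section

/-- Sub-k marginal of a distribution `p` over rankings of `Fin 3` (a ranking is
an item-to-position bijection): the probability of a sub-ranking `ρ` of
`ℬ ⊆ Fin 3` is the total mass of full rankings containing `ρ`. -/
def subProj3 (ℬ : Finset (Fin 3)) (p : Equiv.Perm (Fin 3) → ℝ)
    (ρ : {x // x ∈ ℬ} ≃ Fin ℬ.card) : ℝ :=
  ∑ π : Equiv.Perm (Fin 3),
    if (∀ i j : {x // x ∈ ℬ}, ρ i < ρ j ↔ π i.1 < π j.1) then p π else 0

/-!
The model `h` is constant, so conditioning on `h(X)` or on any of its sub-2 marginals conditions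
on nothing. Left multiplication by the reversal `Fin.revPerm` flips the relative order of every
pair of items, and both the uniform law of `Π` and `h` are invariant under it; hence both give
probability `1/2` to each order of each pair. But `h` puts `2/6` on the identity ranking, whose
true probability is `1/6`.
-/

section Probability

variable {Ω : Type*} [Fintype Ω] (w : Ω → ℝ)

theorem Pr_univ : Pr w Set.univ = ∑ ω, w ω := by
  simp [Pr]

theorem Pr_singleton (a : Ω) : Pr w {a} = w a := by
  simp [Pr]

theorem Pr_add_Pr_compl (A : Set Ω) : Pr w A + Pr w Aᶜ = ∑ ω, w ω := by
  rw [Pr, Pr, ← Finset.sum_add_distrib]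
  refine Finset.sum_congr rfl fun ω _ => ?_
  by_cases hω : ω ∈ A <;> simp [hω]

theorem Pr_eq_half_of_map_compl {A : Set Ω} (e : Ω ≃ Ω) (he : ∀ ω, w (e ω) = w ω)
    (hA : ∀ ω, e ω ∈ A ↔ ω ∉ A) : Pr w A = (∑ ω, w ω) / 2 := by
  have hcompl : Pr w A = Pr w Aᶜ := by
    rw [Pr, ← e.sum_comp]
    exact Finset.sum_congr rfl fun ω _ => by simp only [he, hA, Set.mem_compl_iff]
  linarith [Pr_add_Pr_compl w A]

theorem of_Pr_setOf_const_pos {P : Prop} (h : 0 < Pr w {_ω : Ω | P}) : P := by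
  by_contra hP
  simp [Pr, hP] at h

theorem condPr_setOf_const {P : Prop} (hw : ∑ ω, w ω = 1) (hP : P) (A : Set Ω) :
    condPr w A {_ω : Ω | P} = Pr w A := by
  simp [condPr, hP, Pr_univ, hw]

end Probability

section Product

variable {α β : Type*} [Fintype α] [Fintype β] (c : ℝ)

theorem Pr_const_fst_eq (a : α) :
    Pr (fun _ : α × β => c) {ω | ω.1 = a} = Fintype.card β * c := by
  simp [Pr, Fintype.sum_prod_type_right]

theorem Pr_const_snd_eq (b : β) :
    Pr (fun _ : α × β => c) {ω | ω.2 = b} = Fintype.card α * c := by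
  simp [Pr, Fintype.sum_prod_type]

end Product

def SameOrder {β α γ : Type*} [LT α] [LT γ] (f : β → α) (g : β → γ) : Prop :=
  ∀ i j, f i < f j ↔ g i < g j

theorem sameOrder_iff_of_forall_eq_or_eq {β α γ : Type*} [LinearOrder α] [LinearOrder γ]
    {f : β → α} {g : β → γ} {a b : β} (hcov : ∀ i, i = a ∨ i = b) (hf : f a ≠ f b)
    (hg : g a ≠ g b) : SameOrder f g ↔ (f a < f b ↔ g a < g b) := by
  refine ⟨fun h => h a b, fun h i j => ?_⟩
  rcases hcov i with rfl | rfl <;> rcases hcov j with rfl | rfl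
  · simp
  · exact h
  · rw [← not_le, ← not_le, hf.le_iff_lt, hg.le_iff_lt, h]
  · simp

theorem sameOrder_strictAnti_comp_iff {β α γ δ : Type*} [Fintype β] [LinearOrder α]
    [LinearOrder γ] [LinearOrder δ] (hβ : Fintype.card β = 2) {f : β → α} {g : β → γ}
    (hf : f.Injective) (hg : g.Injective) {r : γ → δ} (hr : StrictAnti r) :
    SameOrder f (r ∘ g) ↔ ¬ SameOrder f g := by
  obtain ⟨a, b, hab, huniv⟩ := Finset.card_eq_two.mp hβ
  have hcov : ∀ i, i = a ∨ i = b := fun i => by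
    simpa using (huniv ▸ Finset.mem_univ i : i ∈ ({a, b} : Finset β))
  have hrg : (r ∘ g) a ≠ (r ∘ g) b := (hr.injective.comp hg).ne hab
  rw [sameOrder_iff_of_forall_eq_or_eq hcov (hf.ne hab) hrg,
    sameOrder_iff_of_forall_eq_or_eq hcov (hf.ne hab) (hg.ne hab), Function.comp_apply,
    Function.comp_apply, hr.lt_iff_gt]
  have hgt : g b < g a ↔ ¬ g a < g b :=
    ⟨lt_asymm, fun h => (hg.ne hab).lt_or_gt.resolve_left h⟩
  rw [hgt]
  tauto

section Rankings

variable {ℬ : Finset (Fin 3)}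

theorem subProj3_eq_Pr (p : Equiv.Perm (Fin 3) → ℝ) (ρ : {x // x ∈ ℬ} ≃ Fin ℬ.card) :
    subProj3 ℬ p ρ = Pr p {π | SameOrder ρ fun i : {x // x ∈ ℬ} => π i.1} := by
  unfold subProj3 Pr
  exact Finset.sum_congr rfl fun π _ => if_congr Iff.rfl rfl rfl

theorem sameOrder_revPerm_mul_iff (hℬ : ℬ.card = 2) (ρ : {x // x ∈ ℬ} ≃ Fin ℬ.card)
    (π : Equiv.Perm (Fin 3)) :
    (SameOrder ρ fun i : {x // x ∈ ℬ} => (Fin.revPerm * π : Equiv.Perm (Fin 3)) i.1) ↔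
      ¬ SameOrder ρ fun i : {x // x ∈ ℬ} => π i.1 :=
  sameOrder_strictAnti_comp_iff (by simpa using hℬ) ρ.injective
    (π.injective.comp Subtype.val_injective) Fin.rev_strictAnti

theorem subProj3_eq_half (hℬ : ℬ.card = 2) {p : Equiv.Perm (Fin 3) → ℝ}
    (hp : ∀ π, p (Fin.revPerm * π) = p π) (ρ : {x // x ∈ ℬ} ≃ Fin ℬ.card) :
    subProj3 ℬ p ρ = (∑ π, p π) / 2 := by
  rw [subProj3_eq_Pr]
  exact Pr_eq_half_of_map_compl p (Equiv.mulLeft Fin.revPerm) hp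
    (sameOrder_revPerm_mul_iff hℬ ρ)

end Rankings

def modelDist (π : Equiv.Perm (Fin 3)) : ℝ :=
  if π = Equiv.refl (Fin 3) ∨ π = Fin.revPerm then 2 / 6 else 1 / 12

theorem modelDist_nonneg (π : Equiv.Perm (Fin 3)) : 0 ≤ modelDist π := by
  unfold modelDist
  split_ifs <;> norm_num

open Finset in
theorem sum_modelDist : ∑ π, modelDist π = 1 := by
  have hpeaks : #{π : Equiv.Perm (Fin 3) | π = Equiv.refl _ ∨ π = Fin.revPerm} = 2 := by decide
  have hrest : #{π : Equiv.Perm (Fin 3) | ¬(π = Equiv.refl _ ∨ π = Fin.revPerm)} = 4 := by decide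
  unfold modelDist
  rw [Finset.sum_ite, Finset.sum_const, Finset.sum_const, hpeaks, hrest]
  norm_num

theorem modelDist_revPerm_mul (π : Equiv.Perm (Fin 3)) :
    modelDist (Fin.revPerm * π) = modelDist π := by
  have hpeaks : Fin.revPerm * π = Equiv.refl _ ∨ Fin.revPerm * π = Fin.revPerm ↔
      π = Equiv.refl _ ∨ π = Fin.revPerm := by
    revert π
    decide
  simp only [modelDist, hpeaks]

/-- There exists a label ranking model that is sub-2 calibrated but not
full-rank calibrated: on the item set `Fin 3`, there is a finite probability
space with random variables `X` (two features, each of probability `1/2`) and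
`R` (uniform over all `6` rankings conditionally on either feature), and a
model `h` assigning probability `2/6` to the rankings `i1≻i2≻i3` (the identity)
and `i3≻i2≻i1` (the reversal) and `1/12` to each remaining ranking, such that
`h` is sub-2 calibrated but not full-rank calibrated. -/
theorem exists_sub2_calibrated_not_full_rank_calibrated :
    ∃ (Ω : Type) (_ : Fintype Ω) (w : Ω → ℝ) (X : Ω → Fin 2)
      (R : Ω → Equiv.Perm (Fin 3)) (h : Fin 2 → Equiv.Perm (Fin 3) → ℝ),
      (∀ ω, 0 ≤ w ω) ∧ (∑ ω, w ω = 1) ∧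
      (∀ x, (∀ π, 0 ≤ h x π) ∧ ∑ π, h x π = 1) ∧
      -- the two features each have probability 1/2
      (∀ x : Fin 2, Pr w {ω | X ω = x} = 1 / 2) ∧
      -- conditionally on either feature, the rankings are uniform
      (∀ (x : Fin 2) (π : Equiv.Perm (Fin 3)),
        condPr w {ω | R ω = π} {ω | X ω = x} = 1 / 6) ∧
      -- the model predicts 2/6 on the identity and the reversal, 1/12 elsewhere
      (∀ (x : Fin 2) (π : Equiv.Perm (Fin 3)),
        h x π = if π = Equiv.refl (Fin 3) ∨ π = Fin.revPerm then 2 / 6 else 1 / 12) ∧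
      -- h is sub-2 calibrated
      (∀ ℬ : Finset (Fin 3), ℬ.card = 2 →
        ∀ (ρ : {x // x ∈ ℬ} ≃ Fin ℬ.card) (q : ({x // x ∈ ℬ} ≃ Fin ℬ.card) → ℝ),
          0 < Pr w {ω | subProj3 ℬ (h (X ω)) = q} →
          condPr w {ω | ∀ i j : {x // x ∈ ℬ}, ρ i < ρ j ↔ R ω i.1 < R ω j.1}
            {ω | subProj3 ℬ (h (X ω)) = q} = q ρ) ∧
      -- h is not full-rank calibrated
      ¬ (∀ (π : Equiv.Perm (Fin 3)) (p : Equiv.Perm (Fin 3) → ℝ),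
          0 < Pr w {ω | h (X ω) = p} →
          condPr w {ω | R ω = π} {ω | h (X ω) = p} = p π) := by
  have hw : ∑ _ω : Fin 2 × Equiv.Perm (Fin 3), (1 / 12 : ℝ) = 1 := by
    simp [Fintype.card_perm]
    norm_num
  have hX (x : Fin 2) :
      Pr (fun _ : Fin 2 × Equiv.Perm (Fin 3) => (1 / 12 : ℝ)) {ω | ω.1 = x} = 1 / 2 := by
    rw [Pr_const_fst_eq]
    simp [Fintype.card_perm]
    norm_num
  refine ⟨Fin 2 × Equiv.Perm (Fin 3), inferInstance, fun _ => 1 / 12, Prod.fst, Prod.snd,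
    fun _ => modelDist, fun _ => by norm_num, hw, fun _ => ⟨modelDist_nonneg, sum_modelDist⟩,
    hX, fun x π => ?_, fun _ _ => rfl, ?_, ?_⟩
  · have hpoint : {ω : Fin 2 × Equiv.Perm (Fin 3) | ω.2 = π} ∩ {ω | ω.1 = x} = {(x, π)} := by
      ext ω
      simp [Prod.ext_iff, and_comm]
    rw [condPr, hpoint, Pr_singleton, hX]
    norm_num
  · intro ℬ hℬ ρ q hq
    obtain rfl := of_Pr_setOf_const_pos _ hq
    rw [condPr_setOf_const _ hw rfl, subProj3_eq_half hℬ modelDist_revPerm_mul, sum_modelDist,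
      Pr_eq_half_of_map_compl _ ((Equiv.refl _).prodCongr (Equiv.mulLeft Fin.revPerm))
        (fun _ => rfl) fun ω => sameOrder_revPerm_mul_iff hℬ ρ ω.2, hw]
  · intro hfull
    have hid := hfull (Equiv.refl _) modelDist (by simp [Pr, Fintype.card_pos])
    rw [condPr_setOf_const _ hw rfl, Pr_const_snd_eq, modelDist] at hid
    norm_num at hid
end
end

section
/- There exists a label ranking model that is top-1 calibrated but not rankwise calibrated: for a 3-item set with Π uniform over all 6 rankings (given either of two equiprobable features) and h assigning probability 1/3 to each of the rankings i1≻i2≻i3, i2≻i1≻i3, i3≻i1≻i2 and 0 to the rest, the top-1 marginals of h(X) equal the true top-1 probabilities (all 1/3), so h is top-1 calibrated, but P(Π = i1≻i2≻i3 | h(X)[i1≻i2≻i3] = 1/3) = 1/6 ≠ 1/3, so h is not rankwise calibrated. -/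
open scoped Classical
noncomputable section

/-- Top-1 marginal of a distribution `p` over rankings of `Fin 3` (rankings are
item-to-position bijections): the probability that item `i` is ranked first. -/
def top1Proj (p : Equiv.Perm (Fin 3) → ℝ) (i : Fin 3) : ℝ :=
  ∑ π : Equiv.Perm (Fin 3), if π i = 0 then p π else 0

open Equiv in
lemma permUniv : (Finset.univ : Finset (Equiv.Perm (Fin 3))) =
    {1, swap 0 1, swap 0 2, swap 1 2, finRotate 3, (finRotate 3)⁻¹} := by decide

open Equiv in
lemma permSum (f : Equiv.Perm (Fin 3) → ℝ) :
    ∑ π, f π = f 1 + f (swap 0 1) + f (swap 0 2) + f (swap 1 2)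
      + f (finRotate 3) + f (finRotate 3)⁻¹ := by
  rw [permUniv]
  rw [Finset.sum_insert (by decide), Finset.sum_insert (by decide),
    Finset.sum_insert (by decide), Finset.sum_insert (by decide),
    Finset.sum_insert (by decide), Finset.sum_singleton]
  ring

def hdef : Fin 2 → Equiv.Perm (Fin 3) → ℝ := fun _ π =>
  if π = Equiv.refl (Fin 3) ∨ π = Equiv.swap 0 1 ∨ π = finRotate 3
    then 1 / 3 else 0

lemma htop (x : Fin 2) : top1Proj (hdef x) = fun _ => (1:ℝ)/3 := by
  funext j
  unfold top1Proj hdef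
  rw [permSum]
  fin_cases j <;>
    (simp (config := { decide := true }); try norm_num)

lemma hBuniv : {ω : Fin 2 × Equiv.Perm (Fin 3) |
    hdef ω.1 (Equiv.refl (Fin 3)) = 1/3} = Set.univ := by
  ext ω
  simp (config := { decide := true }) [hdef]

lemma keypos : Pr (fun _ => (1:ℝ)/12)
    {ω : Fin 2 × Equiv.Perm (Fin 3) | hdef ω.1 (Equiv.refl (Fin 3)) = 1/3} = 1 := by
  unfold Pr
  rw [hBuniv]
  simp only [Set.mem_univ, if_true]
  rw [Fintype.sum_prod_type, Fin.sum_univ_two]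
  simp only [permSum]
  norm_num

lemma keylemma : condPr (fun _ => (1:ℝ)/12)
    {ω : Fin 2 × Equiv.Perm (Fin 3) | ω.2 = Equiv.refl (Fin 3)}
    {ω | hdef ω.1 (Equiv.refl (Fin 3)) = 1/3} = 1/6 := by
  unfold condPr Pr
  rw [hBuniv]
  simp only [Set.mem_inter_iff, Set.mem_univ, and_true, Set.mem_setOf_eq]
  rw [Fintype.sum_prod_type, Fintype.sum_prod_type, Fin.sum_univ_two, Fin.sum_univ_two]
  simp only [permSum]
  simp (config := { decide := true })
  norm_num

/-- There exists a label ranking model that is top-1 calibrated but not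
rankwise calibrated: on the item set `Fin 3` with rankings uniform over all `6`
permutations given either of two equiprobable features, and `h` assigning
probability `1/3` to each of `i1≻i2≻i3` (identity), `i2≻i1≻i3` (`swap 0 1`),
`i3≻i1≻i2` (`finRotate 3`) and `0` to the rest, the model is top-1 calibrated,
but `P(Π = i1≻i2≻i3 | h(X)[i1≻i2≻i3] = 1/3) = 1/6 ≠ 1/3`, so it is not
rankwise calibrated. -/
theorem exists_top1_calibrated_not_rankwise_calibrated :
    ∃ (Ω : Type) (_ : Fintype Ω) (w : Ω → ℝ) (X : Ω → Fin 2)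
      (R : Ω → Equiv.Perm (Fin 3)) (h : Fin 2 → Equiv.Perm (Fin 3) → ℝ),
      (∀ ω, 0 ≤ w ω) ∧ (∑ ω, w ω = 1) ∧
      (∀ x, (∀ π, 0 ≤ h x π) ∧ ∑ π, h x π = 1) ∧
      -- the two features each have probability 1/2
      (∀ x : Fin 2, Pr w {ω | X ω = x} = 1 / 2) ∧
      -- conditionally on either feature, the rankings are uniform
      (∀ (x : Fin 2) (π : Equiv.Perm (Fin 3)),
        condPr w {ω | R ω = π} {ω | X ω = x} = 1 / 6) ∧
      -- the model assigns 1/3 to i1≻i2≻i3, i2≻i1≻i3, i3≻i1≻i2 and 0 elsewhere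
      (∀ (x : Fin 2) (π : Equiv.Perm (Fin 3)),
        h x π = if π = Equiv.refl (Fin 3) ∨ π = Equiv.swap 0 1 ∨ π = finRotate 3
          then 1 / 3 else 0) ∧
      -- h is top-1 calibrated
      (∀ (i : Fin 3) (q : Fin 3 → ℝ),
        0 < Pr w {ω | top1Proj (h (X ω)) = q} →
        condPr w {ω | R ω i = 0} {ω | top1Proj (h (X ω)) = q} = q i) ∧
      -- but P(Π = i1≻i2≻i3 | h(X)[i1≻i2≻i3] = 1/3) = 1/6
      condPr w {ω | R ω = Equiv.refl (Fin 3)}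
        {ω | h (X ω) (Equiv.refl (Fin 3)) = 1 / 3} = 1 / 6 ∧
      -- so h is not rankwise calibrated
      ¬ (∀ (π : Equiv.Perm (Fin 3)) (α : ℝ),
          0 < Pr w {ω | h (X ω) π = α} →
          condPr w {ω | R ω = π} {ω | h (X ω) π = α} = α) := by
  
  refine ⟨Fin 2 × Equiv.Perm (Fin 3), inferInstance, fun _ => 1/12, Prod.fst, Prod.snd,
    hdef, ?_, ?_, ?_, ?_, ?_, ?_, ?_, ?_, ?_⟩
  · intro ω; norm_num
  · simp only [Fintype.sum_prod_type, Fin.sum_univ_two, permSum]; norm_num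
  · intro x
    constructor
    · intro π; unfold hdef; split <;> norm_num
    · unfold hdef; rw [permSum]
      rw [if_pos (by decide), if_pos (by decide), if_neg (by decide),
        if_neg (by decide), if_pos (by decide), if_neg (by decide)]
      norm_num
  · intro x
    unfold Pr
    rw [Fintype.sum_prod_type]
    simp only [Set.mem_setOf_eq, permSum]
    fin_cases x <;> rw [Fin.sum_univ_two] <;> norm_num
  · intro x π
    fin_cases x <;> fin_cases π <;>
      (unfold condPr Pr
       simp only [Fintype.sum_prod_type, Fin.sum_univ_two, permSum,
         Set.mem_inter_iff, Set.mem_setOf_eq]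
       simp (config := { decide := true })
       norm_num)
  · intro x π; rfl
  · intro i q hpos
    by_cases hq : q = fun _ => (1:ℝ)/3
    · subst hq
      have hB : {ω : Fin 2 × Equiv.Perm (Fin 3) |
          top1Proj (hdef ω.1) = fun _ => (1:ℝ)/3} = Set.univ := by
        ext ω; simp [htop]
      unfold condPr Pr
      rw [hB]
      simp only [Set.mem_inter_iff, Set.mem_univ, and_true, Set.mem_setOf_eq]
      rw [Fintype.sum_prod_type, Fintype.sum_prod_type]
      fin_cases i <;>
        (rw [Fin.sum_univ_two, Fin.sum_univ_two]
         simp only [permSum]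
         simp (config := { decide := true })
         norm_num)
    · exfalso
      have hB : {ω : Fin 2 × Equiv.Perm (Fin 3) | top1Proj (hdef ω.1) = q} = ∅ := by
        ext ω
        simp only [Set.mem_setOf_eq, Set.mem_empty_iff_false, iff_false, htop]
        exact fun hc => hq hc.symm
      rw [hB] at hpos
      simp [Pr] at hpos
  · exact keylemma
  · intro H
    have h1 := H (Equiv.refl (Fin 3)) (1/3) (by rw [keypos]; norm_num)
    rw [keylemma] at h1
    norm_num at h1
end
end
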